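/- arXiv:2101.04413 — 2 statements merged into one kernel-verified Lean document; each statement's English description precedes it below -/
import Mathlib

section
/- Let n ≥ 1, m ≥ 1, μ > 0, and let γ satisfy γ ≥ γ̲ > 0 and M₂ > 0. Let s₀,…,s_{m−1}, y₀,…,y_{m−1} ∈ ℝⁿ satisfy, for each l, s_lᵀ y_l > 0 and ‖y_l‖² ≤ M₂ (s_lᵀ y_l). Set ŷ_l = y_l + μ s_l. Define matrices B⁽⁰⁾ = (1/γ + μ) I and, for l = 0,…,m−1, B⁽ˡ⁺¹⁾ = B⁽ˡ⁾ − (B⁽ˡ⁾ s_l)(B⁽ˡ⁾ s_l)ᵀ/(s_lᵀ B⁽ˡ⁾ s_l) + ŷ_l ŷ_lᵀ/(s_lᵀ ŷ_l), where each s_l ≠ 0 (so that s_lᵀ B⁽ˡ⁾ s_l > 0 by positive definiteness of B⁽ˡ⁾). Then for every l = 0,…,m, the trace satisfies tr(B⁽ˡ⁾) ≤ n/γ̲ + m·M₂ + (2m + n)μ. -/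
open scoped RealInnerProductSpace

/-!
BFGS updates preserve positive definiteness, so the subtracted rank-one term
`(Bs)(Bs)ᵀ/(sᵀBs)` has nonnegative trace and each update raises the trace by at most
`‖ŷ‖²/(sᵀŷ)`. For a regularized pair `ŷ = y + μs` with `‖y‖² ≤ M₂ sᵀy` this is at most
`M₂ + 2μ`, while the initial trace is `n (1/γ + μ) ≤ n/γ̲ + nμ`.
-/

open Matrix

namespace Matrix

variable {ι : Type*} [Fintype ι]

noncomputable def bfgsUpdate (B : Matrix ι ι ℝ) (s y : ι → ℝ) : Matrix ι ι ℝ :=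
  B - (s ⬝ᵥ B *ᵥ s)⁻¹ • vecMulVec (B *ᵥ s) (B *ᵥ s) + (s ⬝ᵥ y)⁻¹ • vecMulVec y y

lemma IsSymm.dotProduct_mulVec_comm {B : Matrix ι ι ℝ} (hB : B.IsSymm) (x s : ι → ℝ) :
    x ⬝ᵥ B *ᵥ s = s ⬝ᵥ B *ᵥ x := by
  rw [dotProduct_mulVec, ← mulVec_transpose, hB.eq, dotProduct_comm]

lemma IsSymm.dotProduct_sub_smul_mulVec {B : Matrix ι ι ℝ} (hB : B.IsSymm) (x s : ι → ℝ)
    (t : ℝ) : (x - t • s) ⬝ᵥ B *ᵥ (x - t • s)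
      = x ⬝ᵥ B *ᵥ x - 2 * t * (x ⬝ᵥ B *ᵥ s) + t ^ 2 * (s ⬝ᵥ B *ᵥ s) := by
  simp only [mulVec_sub, mulVec_smul, sub_dotProduct, dotProduct_sub, smul_dotProduct,
    dotProduct_smul, smul_eq_mul, hB.dotProduct_mulVec_comm s x]
  ring

lemma dotProduct_bfgsUpdate_mulVec (B : Matrix ι ι ℝ) (s y x : ι → ℝ) :
    x ⬝ᵥ bfgsUpdate B s y *ᵥ x
      = x ⬝ᵥ B *ᵥ x - (x ⬝ᵥ B *ᵥ s) ^ 2 / (s ⬝ᵥ B *ᵥ s) + (x ⬝ᵥ y) ^ 2 / (s ⬝ᵥ y) := by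
  simp only [bfgsUpdate, add_mulVec, sub_mulVec, smul_mulVec, vecMulVec_mulVec,
    op_smul_eq_smul, dotProduct_add, dotProduct_sub, dotProduct_smul, smul_eq_mul,
    dotProduct_comm (B *ᵥ s) x, dotProduct_comm y x]
  ring

theorem PosDef.bfgsUpdate {B : Matrix ι ι ℝ} (hB : B.PosDef) {s y : ι → ℝ} (hs : s ≠ 0)
    (hsy : 0 < s ⬝ᵥ y) : (B.bfgsUpdate s y).PosDef := by
  have hsymm : B.IsSymm := isHermitian_iff_isSymm.mp hB.isHermitian
  have hpos : ∀ {x : ι → ℝ}, x ≠ 0 → 0 < x ⬝ᵥ B *ᵥ x := fun hx => by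
    simpa using hB.dotProduct_mulVec_pos hx
  refine PosDef.of_dotProduct_mulVec_pos ?_ fun x hx => ?_
  · refine isHermitian_iff_isSymm.mpr ?_
    simp only [Matrix.bfgsUpdate, IsSymm, transpose_add, transpose_sub, transpose_smul,
      transpose_vecMulVec, hsymm.eq]
  rw [star_trivial, dotProduct_bfgsUpdate_mulVec]
  set d := s ⬝ᵥ B *ᵥ s
  have hd : 0 < d := hpos hs
  set t := (x ⬝ᵥ B *ᵥ s) / d with ht_def
  -- The first two terms form the `B`-norm of the `B`-orthogonal projection of `x` onto `s⊥`.
  have hproj : (x - t • s) ⬝ᵥ B *ᵥ (x - t • s) = x ⬝ᵥ B *ᵥ x - (x ⬝ᵥ B *ᵥ s) ^ 2 / d := by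
    rw [hsymm.dotProduct_sub_smul_mulVec, ht_def]
    field_simp
    ring
  rw [← hproj]
  clear_value t
  by_cases hz : x - t • s = 0
  · obtain rfl : x = t • s := sub_eq_zero.mp hz
    have ht : t ≠ 0 := by rintro h; simp [h] at hx
    rw [hz, zero_dotProduct, zero_add, smul_dotProduct, smul_eq_mul]
    exact div_pos (sq_pos_of_ne_zero (mul_ne_zero ht hsy.ne')) hsy
  · exact add_pos_of_pos_of_nonneg (hpos hz) (div_nonneg (sq_nonneg _) hsy.le)

lemma trace_bfgsUpdate_le {B : Matrix ι ι ℝ} (hB : B.PosSemidef) (s y : ι → ℝ) :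
    (B.bfgsUpdate s y).trace ≤ B.trace + (y ⬝ᵥ y) / (s ⬝ᵥ y) := by
  have hBs : 0 ≤ (B *ᵥ s ⬝ᵥ B *ᵥ s) / (s ⬝ᵥ B *ᵥ s) := by
    refine div_nonneg ?_ (by simpa using hB.dotProduct_mulVec_nonneg s)
    simpa using dotProduct_star_self_nonneg (B *ᵥ s)
  simp only [bfgsUpdate, trace_add, trace_sub, trace_smul, trace_vecMulVec, smul_eq_mul]
  rw [inv_mul_eq_div, inv_mul_eq_div]
  linarith

variable {m : ℕ} {B : ℕ → Matrix ι ι ℝ} {s y : ℕ → ι → ℝ}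

theorem posDef_of_bfgs_recursion (h0 : (B 0).PosDef) (hs : ∀ l < m, s l ≠ 0)
    (hsy : ∀ l < m, 0 < s l ⬝ᵥ y l)
    (hrec : ∀ l < m, B (l + 1) = (B l).bfgsUpdate (s l) (y l)) : ∀ l ≤ m, (B l).PosDef
  | 0, _ => h0
  | l + 1, hl => hrec l hl ▸
      (posDef_of_bfgs_recursion h0 hs hsy hrec l (Nat.le_of_succ_le hl)).bfgsUpdate
        (hs l hl) (hsy l hl)

theorem trace_le_of_bfgs_recursion {C : ℝ} (h0 : (B 0).PosDef) (hs : ∀ l < m, s l ≠ 0)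
    (hsy : ∀ l < m, 0 < s l ⬝ᵥ y l)
    (hrec : ∀ l < m, B (l + 1) = (B l).bfgsUpdate (s l) (y l))
    (hC : ∀ l < m, (y l ⬝ᵥ y l) / (s l ⬝ᵥ y l) ≤ C) :
    ∀ l ≤ m, (B l).trace ≤ (B 0).trace + l * C
  | 0, _ => by simp
  | l + 1, hl => by
    have hB := posDef_of_bfgs_recursion h0 hs hsy hrec l (Nat.le_of_succ_le hl)
    have ih := trace_le_of_bfgs_recursion h0 hs hsy hrec hC l (Nat.le_of_succ_le hl)
    calc (B (l + 1)).trace ≤ (B l).trace + (y l ⬝ᵥ y l) / (s l ⬝ᵥ y l) :=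
          hrec l hl ▸ trace_bfgsUpdate_le hB.posSemidef _ _
      _ ≤ (B 0).trace + (l + 1 : ℕ) * C := by push_cast; linarith [hC l hl]

end Matrix

section RegularizedPair

variable {E : Type*} [NormedAddCommGroup E] [InnerProductSpace ℝ E] {s y : E} {μ : ℝ}

lemma inner_add_smul_self_pos (hμ : 0 ≤ μ) (hsy : 0 < ⟪s, y⟫) : 0 < ⟪s, y + μ • s⟫ := by
  rw [inner_add_right, real_inner_smul_right, real_inner_self_eq_norm_sq]
  positivity

lemma norm_add_smul_sq_div_inner_le {M : ℝ} (hμ : 0 ≤ μ) (hsy : 0 < ⟪s, y⟫)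
    (hy : ‖y‖ ^ 2 ≤ M * ⟪s, y⟫) : ‖y + μ • s‖ ^ 2 / ⟪s, y + μ • s⟫ ≤ M + 2 * μ := by
  have hM : 0 ≤ M := nonneg_of_mul_nonneg_left ((sq_nonneg _).trans hy) hsy
  rw [div_le_iff₀ (inner_add_smul_self_pos hμ hsy), norm_add_sq_real, norm_smul,
    inner_add_right, real_inner_smul_right, real_inner_smul_right, real_inner_self_eq_norm_sq,
    real_inner_comm, Real.norm_of_nonneg hμ]
  nlinarith [mul_nonneg (mul_nonneg hμ (add_nonneg hM hμ)) (sq_nonneg ‖s‖)]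

end RegularizedPair

theorem regularized_lbfgs_trace_bound_general (n m : ℕ)
    (μ γ γlow M₂ : ℝ) (hμ : 0 < μ) (hγlow : 0 < γlow) (hγ : γlow ≤ γ) (hM₂ : 0 < M₂)
    (s y yhat : ℕ → EuclideanSpace ℝ (Fin n))
    (hs : ∀ l < m, s l ≠ 0)
    (hsy : ∀ l < m, 0 < ⟪s l, y l⟫)
    (hy : ∀ l < m, ‖y l‖ ^ 2 ≤ M₂ * ⟪s l, y l⟫)
    (hyhat : ∀ l < m, yhat l = y l + μ • s l)
    (Bseq : ℕ → Matrix (Fin n) (Fin n) ℝ)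
    (hB0 : Bseq 0 = (1 / γ + μ) • (1 : Matrix (Fin n) (Fin n) ℝ))
    (hrec : ∀ l < m, Bseq (l + 1) =
      Bseq l
        - (⟪s l, Matrix.toEuclideanLin (Bseq l) (s l)⟫)⁻¹ •
            Matrix.vecMulVec (Matrix.toEuclideanLin (Bseq l) (s l))
              (Matrix.toEuclideanLin (Bseq l) (s l))
        + (⟪s l, yhat l⟫)⁻¹ • Matrix.vecMulVec (yhat l) (yhat l)) :
    ∀ l ≤ m, (Bseq l).trace ≤ (n : ℝ) / γlow + m * M₂ + (2 * m + n) * μ := by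
  have hinner (x z : EuclideanSpace ℝ (Fin n)) : ⟪x, z⟫ = x.ofLp ⬝ᵥ z.ofLp := by
    simp [EuclideanSpace.inner_eq_star_dotProduct, dotProduct_comm]
  have hrec_update (l : ℕ) (hl : l < m) :
      Bseq (l + 1) = (Bseq l).bfgsUpdate (s l).ofLp (yhat l).ofLp := by
    rw [hrec l hl, hinner, hinner]
    rfl
  have hs_ofLp (l : ℕ) (hl : l < m) : (s l).ofLp ≠ 0 := by simpa using hs l hl
  have hsyhat (l : ℕ) (hl : l < m) : 0 < (s l).ofLp ⬝ᵥ (yhat l).ofLp := by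
    rw [← hinner, hyhat l hl]
    exact inner_add_smul_self_pos hμ.le (hsy l hl)
  have hstep (l : ℕ) (hl : l < m) :
      (yhat l).ofLp ⬝ᵥ (yhat l).ofLp / ((s l).ofLp ⬝ᵥ (yhat l).ofLp) ≤ M₂ + 2 * μ := by
    rw [← hinner, ← hinner, real_inner_self_eq_norm_sq, hyhat l hl]
    exact norm_add_smul_sq_div_inner_le hμ.le (hsy l hl) (hy l hl)
  have h0 : (Bseq 0).PosDef := by
    have : 0 < γ := hγlow.trans_le hγ
    exact hB0 ▸ PosDef.one.smul (by positivity)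
  have htr0 : (Bseq 0).trace = n / γ + n * μ := by simp [hB0]; ring
  intro l hl
  have hγ' : (n : ℝ) / γ ≤ n / γlow := div_le_div_of_nonneg_left n.cast_nonneg hγlow hγ
  have hl' : (l : ℝ) * (M₂ + 2 * μ) ≤ m * (M₂ + 2 * μ) := by gcongr
  calc (Bseq l).trace ≤ (Bseq 0).trace + l * (M₂ + 2 * μ) :=
        trace_le_of_bfgs_recursion h0 hs_ofLp hsyhat hrec_update hstep l hl
    _ ≤ n / γlow + m * M₂ + (2 * m + n) * μ := by linarith

/-- **Trace bound for the regularized L-BFGS matrices.** Starting from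
`B⁽⁰⁾ = (1/γ + μ) I` and performing `m` BFGS updates with the regularized pairs
`(s_l, ŷ_l)`, `ŷ_l = y_l + μ s_l`, where `s_lᵀ y_l > 0` and `‖y_l‖² ≤ M₂ (s_lᵀ y_l)`,
every matrix in the recursion satisfies `tr(B⁽ˡ⁾) ≤ n/γ̲ + m M₂ + (2m + n) μ`. -/
theorem regularized_lbfgs_trace_bound (n m : ℕ) (hn : 1 ≤ n) (hm : 1 ≤ m)
    (μ γ γlow M₂ : ℝ) (hμ : 0 < μ) (hγlow : 0 < γlow) (hγ : γlow ≤ γ) (hM₂ : 0 < M₂)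
    (s y yhat : ℕ → EuclideanSpace ℝ (Fin n))
    (hs : ∀ l < m, s l ≠ 0)
    (hsy : ∀ l < m, 0 < ⟪s l, y l⟫)
    (hy : ∀ l < m, ‖y l‖ ^ 2 ≤ M₂ * ⟪s l, y l⟫)
    (hyhat : ∀ l < m, yhat l = y l + μ • s l)
    (Bseq : ℕ → Matrix (Fin n) (Fin n) ℝ)
    (hB0 : Bseq 0 = (1 / γ + μ) • (1 : Matrix (Fin n) (Fin n) ℝ))
    (hrec : ∀ l < m, Bseq (l + 1) =
      Bseq l
        - (⟪s l, Matrix.toEuclideanLin (Bseq l) (s l)⟫)⁻¹ •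
            Matrix.vecMulVec (Matrix.toEuclideanLin (Bseq l) (s l))
              (Matrix.toEuclideanLin (Bseq l) (s l))
        + (⟪s l, yhat l⟫)⁻¹ • Matrix.vecMulVec (yhat l) (yhat l)) :
    ∀ l ≤ m, (Bseq l).trace ≤ (n : ℝ) / γlow + m * M₂ + (2 * m + n) * μ :=
  regularized_lbfgs_trace_bound_general n m μ γ γlow M₂ hμ hγlow hγ hM₂ s y yhat hs hsy hy hyhat
    Bseq hB0 hrec
end

section
/- Let n ≥ 1 and let f : ℝⁿ → ℝ be differentiable with gradient ∇f. Let x ∈ ℝⁿ, let H be an n×n real symmetric positive-definite matrix, and set d = −H ∇f(x). Let L_g > 0 be such that ‖∇f(x + τ d) − ∇f(x)‖ ≤ L_g τ ‖d‖ for all τ ∈ [0,1]. Let 0 < η₁ < 1, and define q = f(x) + ∇f(x)ᵀ d + (1/2) dᵀ H⁻¹ d. If λ_min(H⁻¹) ≥ L_g/(2 − η₁), then f(x) − f(x + d) ≥ η₁ (f(x) − q); that is, the trust-region-type ratio r = (f(x) − f(x+d))/(f(x) − q) is at least η₁ whenever f(x) > q. -/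
/-!
Since `d = -H ∇f(x)`, the slope is `⟪∇f(x), d⟫ = -s` with `s = ⟪d, H⁻¹ d⟫`, so `f(x) - q = s / 2`.
The Lipschitz bound on the gradient along the segment gives the descent lemma
`f(x + d) ≤ f(x) + ⟪∇f(x), d⟫ + (L_g / 2) ‖d‖²`, and the eigenvalue bound on `H⁻¹` gives
`L_g ‖d‖² ≤ (2 - η₁) s`. Hence `f(x) - f(x + d) ≥ s - (2 - η₁) s / 2 = η₁ s / 2`.
-/

open scoped RealInnerProductSpace

open scoped MatrixOrder in
theorem Matrix.IsHermitian.algebraMap_le_of_le_eigenvalues {𝕜 ι : Type*} [RCLike 𝕜] [Fintype ι]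
    [DecidableEq ι] {M : Matrix ι ι 𝕜} (hM : M.IsHermitian) {c : ℝ}
    (hc : ∀ i, c ≤ hM.eigenvalues i) : algebraMap ℝ (Matrix ι ι 𝕜) c ≤ M := by
  rw [algebraMap_le_iff_le_spectrum hM.isSelfAdjoint, hM.spectrum_real_eq_range_eigenvalues]
  rintro _ ⟨i, rfl⟩
  exact hc i

theorem Matrix.IsHermitian.mul_norm_sq_le_re_inner {𝕜 ι : Type*} [RCLike 𝕜] [Fintype ι]
    [DecidableEq ι] {M : Matrix ι ι 𝕜} (hM : M.IsHermitian) {c : ℝ}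
    (hc : ∀ i, c ≤ hM.eigenvalues i) (v : EuclideanSpace 𝕜 ι) :
    c * ‖v‖ ^ 2 ≤ RCLike.re (inner 𝕜 v (M.toEuclideanLin v)) := by
  have hpos := Matrix.isPositive_toEuclideanLin_iff.mpr
    (Matrix.le_iff.mp (hM.algebraMap_le_of_le_eigenvalues hc))
  have hquad := hpos.re_inner_nonneg_right v
  simp only [Algebra.algebraMap_eq_smul_one, map_sub, LinearMap.sub_apply, inner_sub_right,
    sub_nonneg] at hquad
  have hscalar : (c • 1 : Matrix ι ι 𝕜).toEuclideanLin v = (c : 𝕜) • v := by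
    rw [← RCLike.real_smul_eq_coe_smul (K := 𝕜)]
    ext i
    simp [Matrix.toLpLin_apply, Matrix.smul_mulVec]
  rwa [hscalar, inner_smul_right, inner_self_eq_norm_sq_to_K, ← RCLike.ofReal_pow,
    ← RCLike.ofReal_mul, RCLike.ofReal_re] at hquad

theorem DifferentiableAt.hasDerivAt_comp_add_smul {E : Type*} [NormedAddCommGroup E]
    [InnerProductSpace ℝ E] [CompleteSpace E] {f : E → ℝ} {x d : E} {τ : ℝ}
    (hf : DifferentiableAt ℝ f (x + τ • d)) :
    HasDerivAt (fun t : ℝ => f (x + t • d)) ⟪gradient f (x + τ • d), d⟫ τ := by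
  have hline : HasDerivAt (fun t : ℝ => x + t • d) d τ := by
    simpa using ((hasDerivAt_id τ).smul_const d).const_add x
  have h := hf.hasGradientAt.hasFDerivAt.comp_hasDerivAt τ hline
  rw [InnerProductSpace.toDual_apply_apply] at h
  exact h

theorem apply_add_le_of_norm_gradient_sub_le {E : Type*} [NormedAddCommGroup E]
    [InnerProductSpace ℝ E] [CompleteSpace E] {f : E → ℝ} {x d : E} {L : ℝ}
    (hf : ∀ τ ∈ Set.Icc (0 : ℝ) 1, DifferentiableAt ℝ f (x + τ • d))
    (hlip : ∀ τ ∈ Set.Icc (0 : ℝ) 1, ‖gradient f (x + τ • d) - gradient f x‖ ≤ L * τ * ‖d‖) :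
    f (x + d) ≤ f x + ⟪gradient f x, d⟫ + L / 2 * ‖d‖ ^ 2 := by
  set φ : ℝ → ℝ := fun τ => f (x + τ • d) - τ * ⟪gradient f x, d⟫ - L * ‖d‖ ^ 2 * τ ^ 2 / 2
  have hφ : ∀ τ ∈ Set.Icc (0 : ℝ) 1,
      HasDerivAt φ (⟪gradient f (x + τ • d) - gradient f x, d⟫ - L * ‖d‖ ^ 2 * τ) τ := by
    intro τ hτ
    refine (((hf τ hτ).hasDerivAt_comp_add_smul.sub
      ((hasDerivAt_id τ).mul_const ⟪gradient f x, d⟫)).sub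
      (((hasDerivAt_pow 2 τ).const_mul (L * ‖d‖ ^ 2)).div_const 2)).congr_deriv ?_
    rw [inner_sub_left]
    simp only [one_mul, Nat.cast_ofNat]
    ring
  have hanti : AntitoneOn φ (Set.Icc 0 1) := by
    refine antitoneOn_of_hasDerivWithinAt_nonpos (convex_Icc 0 1)
      (fun τ hτ => (hφ τ hτ).continuousAt.continuousWithinAt)
      (fun τ hτ => (hφ τ (interior_subset hτ)).hasDerivWithinAt) fun τ hτ => ?_
    have hτ' := interior_subset hτ
    calc ⟪gradient f (x + τ • d) - gradient f x, d⟫ - L * ‖d‖ ^ 2 * τ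
        ≤ L * τ * ‖d‖ * ‖d‖ - L * ‖d‖ ^ 2 * τ := by
          gcongr
          exact (real_inner_le_norm _ _).trans
            (mul_le_mul_of_nonneg_right (hlip τ hτ') (norm_nonneg d))
      _ = 0 := by ring
  have h01 := hanti (Set.left_mem_Icc.mpr zero_le_one) (Set.right_mem_Icc.mpr zero_le_one)
    zero_le_one
  simp only [φ, one_smul, zero_smul, add_zero, zero_mul, one_pow, mul_one, one_mul] at h01
  linarith

theorem Matrix.toEuclideanLin_nonsing_inv_apply_toEuclideanLin {𝕜 ι : Type*} [RCLike 𝕜]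
    [Fintype ι] [DecidableEq ι] {H : Matrix ι ι 𝕜} (hH : IsUnit H.det) (w : EuclideanSpace 𝕜 ι) :
    H⁻¹.toEuclideanLin (H.toEuclideanLin w) = w := by
  ext i
  simp [Matrix.toLpLin_apply, Matrix.mulVec_mulVec, Matrix.nonsing_inv_mul H hH]

theorem regularized_ratio_termination_general (n : ℕ)
    (f : EuclideanSpace ℝ (Fin n) → ℝ) (hf : Differentiable ℝ f)
    (x : EuclideanSpace ℝ (Fin n))
    (H : Matrix (Fin n) (Fin n) ℝ) (hH : H.PosDef)
    (d : EuclideanSpace ℝ (Fin n))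
    (hd : d = -(Matrix.toEuclideanLin H (gradient f x)))
    (L_g : ℝ)
    (hlip : ∀ τ ∈ Set.Icc (0 : ℝ) 1,
      ‖gradient f (x + τ • d) - gradient f x‖ ≤ L_g * τ * ‖d‖)
    (η₁ : ℝ) (hη₁' : η₁ < 1)
    (q : ℝ)
    (hq : q = f x + ⟪gradient f x, d⟫
        + (1 / 2) * ⟪d, Matrix.toEuclideanLin H⁻¹ d⟫)
    (heig : ∀ i : Fin n, L_g / (2 - η₁) ≤ (hH.inv.1.eigenvalues i : ℝ)) :
    f x - f (x + d) ≥ η₁ * (f x - q) := by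
  have hgrad : gradient f x = -(H⁻¹.toEuclideanLin d) := by
    rw [hd, map_neg, Matrix.toEuclideanLin_nonsing_inv_apply_toEuclideanLin
      (H.isUnit_iff_isUnit_det.mp hH.isUnit), neg_neg]
  have hslope : ⟪gradient f x, d⟫ = -⟪d, H⁻¹.toEuclideanLin d⟫ := by
    rw [hgrad, inner_neg_left, real_inner_comm]
  have hcurv : L_g * ‖d‖ ^ 2 ≤ (2 - η₁) * ⟪d, H⁻¹.toEuclideanLin d⟫ := by
    have h := hH.inv.1.mul_norm_sq_le_re_inner heig d
    rw [RCLike.re_to_real, div_mul_eq_mul_div, div_le_iff₀ (by linarith)] at h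
    linarith
  have hdesc := apply_add_le_of_norm_gradient_sub_le (fun τ _ => hf (x + τ • d)) hlip
  have hmodel : f x - q = ⟪d, H⁻¹.toEuclideanLin d⟫ / 2 := by
    rw [hq, hslope]
    ring
  rw [hmodel]
  linarith

/-- **Inner-loop termination criterion.** Let `f : ℝⁿ → ℝ` be differentiable, `H` symmetric
positive definite, `d = −H ∇f(x)`, suppose `‖∇f(x + τ d) − ∇f(x)‖ ≤ L_g τ ‖d‖` for all
`τ ∈ [0,1]`, let `0 < η₁ < 1`, and `q = f(x) + ∇f(x)ᵀ d + (1/2) dᵀ H⁻¹ d`. If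
`λ_min(H⁻¹) ≥ L_g/(2 − η₁)` (i.e. every eigenvalue of `H⁻¹` is at least `L_g/(2 − η₁)`),
then `f(x) − f(x + d) ≥ η₁ (f(x) − q)`. -/
theorem regularized_ratio_termination (n : ℕ) (hn : 1 ≤ n)
    (f : EuclideanSpace ℝ (Fin n) → ℝ) (hf : Differentiable ℝ f)
    (x : EuclideanSpace ℝ (Fin n))
    (H : Matrix (Fin n) (Fin n) ℝ) (hH : H.PosDef)
    (d : EuclideanSpace ℝ (Fin n))
    (hd : d = -(Matrix.toEuclideanLin H (gradient f x)))
    (L_g : ℝ) (hLg : 0 < L_g)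
    (hlip : ∀ τ ∈ Set.Icc (0 : ℝ) 1,
      ‖gradient f (x + τ • d) - gradient f x‖ ≤ L_g * τ * ‖d‖)
    (η₁ : ℝ) (hη₁ : 0 < η₁) (hη₁' : η₁ < 1)
    (q : ℝ)
    (hq : q = f x + ⟪gradient f x, d⟫
        + (1 / 2) * ⟪d, Matrix.toEuclideanLin H⁻¹ d⟫)
    (heig : ∀ i : Fin n, L_g / (2 - η₁) ≤ (hH.inv.1.eigenvalues i : ℝ)) :
    f x - f (x + d) ≥ η₁ * (f x - q) :=
  regularized_ratio_termination_general n f hf x H hH d hd L_g hlip η₁ hη₁' q hq heig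
end
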